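/- arXiv:2110.02838 — 4 statements merged into one kernel-verified Lean document; each statement's English description precedes it below -/
import Mathlib

section
/- Transformation rule for the operator 𝔡: let Z be a meromorphic (or holomorphic, nonvanishing) function, h a locally injective holomorphic change of coordinate with w = h(z), and let Z̃ be defined so that Z̃(w)·(dw)⁴ = Z(z)·(dz)⁴, i.e. Z̃(h(z)) = Z(z)/h'(z)⁴. Define 𝔡_z(Z) = (1/2)·Z''/Z - (9/16)·(Z'/Z)² (derivatives in z), and similarly 𝔡_w(Z̃) in the variable w. Then 𝔡_z(Z)(z) = 𝔡_w(Z̃)(h(z))·h'(z)² + 2·S(h)(z), where S(h) is the Schwarzian derivative of h. -/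
/-!
Differentiating `Z̃ ∘ h = Z / h'⁴` once, and then the resulting formula for `Z̃' ∘ h` once more,
expresses `Z̃'` and `Z̃''` at `h z` through the 3-jet of `h` and the 2-jet of `Z` at `z`; the
chain rule is applied backwards, by uniqueness of derivatives. After substituting these values
the transformation rule is an identity of rational functions.
-/

open Filter Topology

variable {𝕜 : Type*} [NontriviallyNormedField 𝕜]

theorem HasDerivAt.mul_eq_of_comp_eventuallyEq {f g F : 𝕜 → 𝕜} {f' g' F' x : 𝕜}
    (hf : HasDerivAt f f' (g x)) (hg : HasDerivAt g g' x) (hF : HasDerivAt F F' x)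
    (hfg : f ∘ g =ᶠ[𝓝 x] F) : f' * g' = F' :=
  (hf.comp x hg).unique (hF.congr_of_eventuallyEq hfg)

section QuarticPullback

variable {Z h h' h'' Zt Zt' : 𝕜 → 𝕜} {x Z'x h''x h'''x Zt'hx Zt''hx : 𝕜}

theorem deriv_quartic_pullback_eq
    (hZ : HasDerivAt Z Z'x x) (hh : HasDerivAt h (h' x) x) (hh' : HasDerivAt h' h''x x)
    (hZt : HasDerivAt Zt Zt'hx (h x)) (hh'x : h' x ≠ 0)
    (hrel : ∀ᶠ y in 𝓝 x, Zt (h y) = Z y / h' y ^ 4) :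
    Zt'hx = (Z'x * h' x - 4 * Z x * h''x) / h' x ^ 6 := by
  have key := hZt.mul_eq_of_comp_eventuallyEq hh (hZ.div (hh'.pow 4) (pow_ne_zero 4 hh'x)) hrel
  simp only [Pi.pow_apply, Nat.cast_ofNat, Nat.reduceSub] at key
  field_simp at key ⊢
  linear_combination key

theorem deriv2_quartic_pullback_eq {Z' : 𝕜 → 𝕜} {Z''x : 𝕜}
    (hZ : HasDerivAt Z (Z' x) x) (hZ' : HasDerivAt Z' Z''x x) (hh : HasDerivAt h (h' x) x)
    (hh' : HasDerivAt h' (h'' x) x) (hh'' : HasDerivAt h'' h'''x x)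
    (hZt' : HasDerivAt Zt' Zt''hx (h x)) (hh'x : h' x ≠ 0)
    (hrel' : ∀ᶠ y in 𝓝 x, Zt' (h y) = (Z' y * h' y - 4 * Z y * h'' y) / h' y ^ 6) :
    Zt''hx = (Z''x * h' x ^ 2 - 9 * Z' x * h' x * h'' x - 4 * Z x * h' x * h'''x
      + 24 * Z x * h'' x ^ 2) / h' x ^ 8 := by
  have hG := ((hZ'.mul hh').sub ((hZ.const_mul 4).mul hh'')).div (hh'.pow 6)
    (pow_ne_zero 6 hh'x)
  have key := hZt'.mul_eq_of_comp_eventuallyEq hh hG hrel'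
  simp only [Pi.mul_apply, Pi.sub_apply, Pi.pow_apply, Nat.cast_ofNat, Nat.reduceSub] at key
  field_simp at key ⊢
  linear_combination key

end QuarticPullback

theorem stmt4 (U V : Set ℂ) (hU : IsOpen U) (z : ℂ) (hz : z ∈ U)
    (Z Z' Z'' h h' h'' h''' Zt Zt' Zt'' : ℂ → ℂ)
    (hZ : ∀ w ∈ U, HasDerivAt Z (Z' w) w)
    (hZd : ∀ w ∈ U, HasDerivAt Z' (Z'' w) w)
    (hh : ∀ w ∈ U, HasDerivAt h (h' w) w)
    (hhd : ∀ w ∈ U, HasDerivAt h' (h'' w) w)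
    (hhdd : ∀ w ∈ U, HasDerivAt h'' (h''' w) w)
    (hmaps : Set.MapsTo h U V)
    (hZt : ∀ v ∈ V, HasDerivAt Zt (Zt' v) v)
    (hZtd : ∀ v ∈ V, HasDerivAt Zt' (Zt'' v) v)
    (hZne : ∀ w ∈ U, Z w ≠ 0)
    (hhne : ∀ w ∈ U, h' w ≠ 0)
    (hrel : ∀ w ∈ U, Zt (h w) = Z w / (h' w) ^ 4) :
    (1 / 2) * (Z'' z / Z z) - (9 / 16) * (Z' z / Z z) ^ 2 =
      ((1 / 2) * (Zt'' (h z) / Zt (h z)) - (9 / 16) * (Zt' (h z) / Zt (h z)) ^ 2) * (h' z) ^ 2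
        + 2 * (h''' z / h' z - (3 / 2) * (h'' z / h' z) ^ 2) := by
  have hZt' : ∀ w ∈ U, Zt' (h w) = (Z' w * h' w - 4 * Z w * h'' w) / h' w ^ 6 :=
    fun w hw ↦ deriv_quartic_pullback_eq (hZ w hw) (hh w hw) (hhd w hw) (hZt _ (hmaps hw))
      (hhne w hw) (eventually_of_mem (hU.mem_nhds hw) hrel)
  have hZt'' := deriv2_quartic_pullback_eq (hZ z hz) (hZd z hz) (hh z hz) (hhd z hz)
    (hhdd z hz) (hZtd _ (hmaps hz)) (hhne z hz) (eventually_of_mem (hU.mem_nhds hz) hZt')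
  rw [hZt'', hZt' z hz, hrel z hz]
  have hZz := hZne z hz
  have hh'z := hhne z hz
  field_simp
  ring
end

section
/- The operator 𝔡 is invariant under Möbius coordinate changes: with the notation of the transformation rule, if h is a Möbius transformation (so S(h)=0), then 𝔡_z(Z)(z) = 𝔡_w(Z̃)(h(z))·h'(z)², i.e., the quadratic differential 𝔡(Z dz⁴) := ((1/2)Z''/Z - (9/16)(Z'/Z)²)dz² is well defined with respect to a projective atlas. -/
/-!
Write `q w = c * w + d`. Since `h' = 1 / q²` and `q` is affine, the relation `Z̃ ∘ h = Z · q⁸`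
differentiates to explicit formulas for `Z̃' ∘ h` and `Z̃'' ∘ h` in terms of `Z, Z', Z''` and `q`.
Substituting them, the terms in `c Z' / (Z q)` and `c² / q²` produced by the quotient `Z̃''/Z̃`
are cancelled exactly by those of `(9/16) (Z̃'/Z̃)²`; this is where the weights `4` and `9/16` fit.
-/

open Filter Topology

section Deriv

variable {𝕜 : Type*} [NontriviallyNormedField 𝕜]

theorem hasDerivAt_mobius (a b c d w : 𝕜) (hw : c * w + d ≠ 0) :
    HasDerivAt (fun x => (a * x + b) / (c * x + d)) ((a * d - b * c) / (c * w + d) ^ 2) w := by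
  have hnum : HasDerivAt (fun x => a * x + b) a w := by
    simpa using ((hasDerivAt_id w).const_mul a).add_const b
  have hden : HasDerivAt (fun x => c * x + d) c w := by
    simpa using ((hasDerivAt_id w).const_mul c).add_const d
  exact (hnum.div hden hw).congr_deriv (by ring)

theorem hasDerivAt_affine_pow (c d w : 𝕜) (n : ℕ) :
    HasDerivAt (fun x => (c * x + d) ^ (n + 1)) ((n + 1) * (c * w + d) ^ n * c) w := by
  have hden : HasDerivAt (fun x => c * x + d) c w := by
    simpa using ((hasDerivAt_id w).const_mul c).add_const d
  simpa using hden.fun_pow (n + 1)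

theorem HasDerivAt.mul_deriv_eq_of_comp_eventuallyEq {F G h : 𝕜 → 𝕜} {F' G' h' w : 𝕜}
    (hF : HasDerivAt F F' (h w)) (hh : HasDerivAt h h' w) (hG : HasDerivAt G G' w)
    (hFG : F ∘ h =ᶠ[𝓝 w] G) : F' * h' = G' :=
  ((hF.comp w hh).congr_of_eventuallyEq hFG.symm).unique hG

end Deriv

theorem mobius_invariance_identity {K : Type*} [Field K] [CharZero K]
    {Z Z' Z'' Zt Zt' Zt'' c q h' : K} (hZ : Z ≠ 0) (hq : q ≠ 0)
    (hh' : h' = 1 / q ^ 2) (hZt : Zt = Z * q ^ 8) (hZt' : Zt' = Z' * q ^ 10 + 8 * c * (Z * q ^ 9))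
    (hZt'' : Zt'' * h' =
      Z'' * q ^ 10 + Z' * (10 * q ^ 9 * c) + 8 * c * (Z' * q ^ 9 + Z * (9 * q ^ 8 * c))) :
    (1 / 2) * (Z'' / Z) - (9 / 16) * (Z' / Z) ^ 2 =
      ((1 / 2) * (Zt'' / Zt) - (9 / 16) * (Zt' / Zt) ^ 2) * h' ^ 2 := by
  subst hh' hZt hZt'
  rw [← eq_div_iff (by simpa using hq)] at hZt''
  subst hZt''
  field_simp
  ring

theorem stmt5 (U V : Set ℂ) (hU : IsOpen U) (a b c d : ℂ) (hdet : a * d - b * c = 1)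
    (hcd : ∀ w ∈ U, c * w + d ≠ 0)
    (Z Z' Z'' Zt Zt' Zt'' : ℂ → ℂ)
    (hZne : ∀ w ∈ U, Z w ≠ 0)
    (hZ : ∀ w ∈ U, HasDerivAt Z (Z' w) w)
    (hZd : ∀ w ∈ U, HasDerivAt Z' (Z'' w) w)
    (h hder : ℂ → ℂ)
    (hmob : ∀ w, h w = (a * w + b) / (c * w + d))
    (hderdef : ∀ w, hder w = (a * d - b * c) / (c * w + d) ^ 2)
    (hmaps : Set.MapsTo h U V)
    (hZt : ∀ v ∈ V, HasDerivAt Zt (Zt' v) v)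
    (hZtd : ∀ v ∈ V, HasDerivAt Zt' (Zt'' v) v)
    (hrel : ∀ w ∈ U, Zt (h w) = Z w / (hder w) ^ 4)
    (z : ℂ) (hz : z ∈ U) :
    (1 / 2) * (Z'' z / Z z) - (9 / 16) * (Z' z / Z z) ^ 2 =
      ((1 / 2) * (Zt'' (h z) / Zt (h z)) - (9 / 16) * (Zt' (h z) / Zt (h z)) ^ 2)
        * (hder z) ^ 2 := by
  have hder_eq : ∀ w, hder w = 1 / (c * w + d) ^ 2 := fun w => by rw [hderdef, hdet]
  have hh : ∀ w ∈ U, HasDerivAt h (hder w) w := fun w hw => by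
    rw [funext hmob, hderdef]
    exact hasDerivAt_mobius a b c d w (hcd w hw)
  have hZt_comp : ∀ w ∈ U, Zt (h w) = Z w * (c * w + d) ^ 8 := fun w hw => by
    rw [hrel w hw, hder_eq, div_pow, one_pow, div_div_eq_mul_div, div_one, ← pow_mul]
  have hZt'_comp :
      ∀ w ∈ U, Zt' (h w) = Z' w * (c * w + d) ^ 10 + 8 * c * (Z w * (c * w + d) ^ 9) := by
    intro w hw
    have hchain := (hZt (h w) (hmaps hw)).mul_deriv_eq_of_comp_eventuallyEq (hh w hw)
      ((hZ w hw).mul (hasDerivAt_affine_pow c d w 7))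
      (eventuallyEq_of_mem (hU.mem_nhds hw) hZt_comp)
    rw [hder_eq] at hchain
    field_simp [hcd w hw] at hchain
    linear_combination hchain
  have hG : HasDerivAt (fun x => Z' x * (c * x + d) ^ 10 + 8 * c * (Z x * (c * x + d) ^ 9))
      (Z'' z * (c * z + d) ^ 10 + Z' z * (10 * (c * z + d) ^ 9 * c)
        + 8 * c * (Z' z * (c * z + d) ^ 9 + Z z * (9 * (c * z + d) ^ 8 * c))) z := by
    have hG := ((hZd z hz).mul (hasDerivAt_affine_pow c d z 9)).add
      (((hZ z hz).mul (hasDerivAt_affine_pow c d z 8)).const_mul (8 * c))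
    norm_num at hG
    exact hG
  have hZt''_comp := (hZtd (h z) (hmaps hz)).mul_deriv_eq_of_comp_eventuallyEq (hh z hz) hG
    (eventuallyEq_of_mem (hU.mem_nhds hz) hZt'_comp)
  exact mobius_invariance_identity (hZne z hz) (hcd z hz) (hder_eq z) (hZt_comp z hz)
    (hZt'_comp z hz) hZt''_comp
end

section
/- Local normalization of a projective connection: suppose on a neighborhood of 0 in ℂ a holomorphic sl(2,ℂ)-valued 1-form α dw is given with α = x¹₁(a¹₁ - a²₂) + a¹₂·0 + a²₁ + x¹₂·a¹₂ (i.e., lower-left entry identically 1), where x¹₁, x¹₂ are holomorphic. If g is a holomorphic solution of g'' - g'² + (x¹₁)' + (x¹₁)² + x¹₂ = 0 near 0, b := e^{-g}(x¹₁ + g'), and z is a primitive of e^{2g}dw with z(0)=0, then the gauge transform of α dw by the map x = e^g a¹₁ + e^{-g} a²₂ + b a¹₂ (i.e., x⁻¹(α dw)x + x⁻¹ dx) equals a²₁ dz, where a²₁ is the elementary matrix with 1 in position (2,1). -/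
open Matrix

noncomputable section

/-- 2×2 elementary matrices a^i_j. -/
def E2 (i j : Fin 2) : Matrix (Fin 2) (Fin 2) ℂ := Matrix.single i j 1

/-!
Everything is an identity of 2×2 matrices at a single point. Conjugating `α` by the
upper-triangular `x` leaves `e^{2g}` in the lower-left corner; the choice of `b` makes the
diagonal of `x⁻¹ α x + x⁻¹ dx` cancel, and its upper-right entry is `e^{-2g}` times the
left-hand side of the equation for `g`, hence vanishes.
-/

def gaugeTransform {n R : Type*} [Fintype n] [DecidableEq n] [CommRing R]
    (X DX A : Matrix n n R) : Matrix n n R :=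
  X⁻¹ * A * X + X⁻¹ * DX

lemma smul_E2_add_smul_E2_add_smul_E2 (p q r : ℂ) :
    p • E2 0 0 + q • E2 1 1 + r • E2 0 1 = !![p, r; 0, q] := by
  ext i j; fin_cases i <;> fin_cases j <;> simp [E2]

lemma smul_E2_sub_add_E2_add_smul_E2 (x y : ℂ) :
    x • (E2 0 0 - E2 1 1) + E2 1 0 + y • E2 0 1 = !![x, y; 1, -x] := by
  ext i j; fin_cases i <;> fin_cases j <;> simp [E2]

lemma smul_E2_one_zero (c : ℂ) : c • E2 1 0 = !![0, 0; c, 0] := by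
  ext i j; fin_cases i <;> fin_cases j <;> simp [E2]

lemma inv_upperTriangular {R : Type*} [CommRing R] {u v : R} (r : R) (huv : u * v = 1) :
    (!![u, r; 0, v])⁻¹ = !![v, -r; 0, u] := by
  refine inv_eq_right_inv ?_
  rw [mul_fin_two, one_fin_two, mul_comm v u, huv]
  simp only [EmbeddingLike.apply_eq_iff_eq, vecCons_inj, and_true]
  exact ⟨⟨by ring, by ring⟩, by ring, by ring⟩

lemma hasDerivAt_upperTriangular_apply {𝕜 : Type*} [NontriviallyNormedField 𝕜]
    {p q r : 𝕜 → 𝕜} {p' q' r' w : 𝕜}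
    (hp : HasDerivAt p p' w) (hq : HasDerivAt q q' w) (hr : HasDerivAt r r' w) (i j : Fin 2) :
    HasDerivAt (fun t => !![p t, r t; 0, q t] i j) (!![p', r'; 0, q'] i j) w := by
  fin_cases i <;> fin_cases j
  exacts [hp, hr, hasDerivAt_const w 0, hq]

/-- In the notation of the theorem, `u = e^g`, `v = e^{-g}`, `x = x¹₁`, `y = x¹₂`, and the
upper-right entry `v * (x + g')` of the gauge is `b`. -/
lemma gaugeTransform_normalize {R : Type*} [CommRing R] {u v g' g'' x x' y : R}
    (huv : u * v = 1) (hode : g'' - g' ^ 2 + x' + x ^ 2 + y = 0) :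
    gaugeTransform !![u, v * (x + g'); 0, v]
        !![g' * u, v * (x' + g'') - g' * (v * (x + g')); 0, -g' * v] !![x, y; 1, -x]
      = !![0, 0; u ^ 2, 0] := by
  rw [gaugeTransform, inv_upperTriangular _ huv]
  simp only [mul_fin_two, of_add_of, cons_add_cons, empty_add_empty,
    EmbeddingLike.apply_eq_iff_eq, vecCons_inj, and_true]
  exact ⟨⟨by ring, by linear_combination v ^ 2 * hode⟩, by ring, by ring⟩

theorem stmt6_general (U : Set ℂ)
    (g g' g'' x11 x11' x12 b : ℂ → ℂ)
    (X DX : ℂ → Matrix (Fin 2) (Fin 2) ℂ)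
    (hg : ∀ w ∈ U, HasDerivAt g (g' w) w)
    (hgd : ∀ w ∈ U, HasDerivAt g' (g'' w) w)
    (hx11 : ∀ w ∈ U, HasDerivAt x11 (x11' w) w)
    (hode : ∀ w ∈ U, g'' w - (g' w) ^ 2 + x11' w + (x11 w) ^ 2 + x12 w = 0)
    (hb : ∀ w, b w = Complex.exp (-(g w)) * (x11 w + g' w))
    (hX : ∀ w, X w = Complex.exp (g w) • E2 0 0 + Complex.exp (-(g w)) • E2 1 1 + b w • E2 0 1)
    (hDX : ∀ w ∈ U, ∀ i j, HasDerivAt (fun t => X t i j) (DX w i j) w) :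
    ∀ w ∈ U,
      (X w)⁻¹ * (x11 w • (E2 0 0 - E2 1 1) + E2 1 0 + x12 w • E2 0 1) * X w
          + (X w)⁻¹ * DX w
        = Complex.exp (2 * g w) • E2 1 0 := by
  intro w hw
  obtain rfl : b = fun t => Complex.exp (-(g t)) * (x11 t + g' t) := funext hb
  obtain rfl : X = fun t => !![Complex.exp (g t), Complex.exp (-(g t)) * (x11 t + g' t);
      0, Complex.exp (-(g t))] := funext fun t => by rw [hX, smul_E2_add_smul_E2_add_smul_E2]
  have hexp := (hg w hw).cexp
  have hexp_neg := (hg w hw).neg.cexp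
  have hDXw : DX w = !![g' w * Complex.exp (g w),
      Complex.exp (-(g w)) * (x11' w + g'' w) - g' w * (Complex.exp (-(g w)) * (x11 w + g' w));
      0, -g' w * Complex.exp (-(g w))] := by
    ext i j
    refine (hDX w hw i j).unique ?_
    refine hasDerivAt_upperTriangular_apply (by simpa [mul_comm] using hexp)
      (by simpa [mul_comm] using hexp_neg)
      ((hexp_neg.mul ((hx11 w hw).add (hgd w hw))).congr_deriv
        (by simp only [Pi.neg_apply, Pi.add_apply]; ring)) i j
  have huv : Complex.exp (g w) * Complex.exp (-(g w)) = 1 := by rw [← Complex.exp_add]; simp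
  have hexp_two : Complex.exp (2 * g w) = Complex.exp (g w) ^ 2 := by
    rw [← Complex.exp_nat_mul]; norm_num
  rw [hDXw, smul_E2_sub_add_E2_add_smul_E2, smul_E2_one_zero, hexp_two]
  exact gaugeTransform_normalize huv (hode w hw)

theorem stmt6 (U : Set ℂ) (hU : IsOpen U)
    (g g' g'' x11 x11' x12 b zc : ℂ → ℂ)
    (X DX : ℂ → Matrix (Fin 2) (Fin 2) ℂ)
    (hg : ∀ w ∈ U, HasDerivAt g (g' w) w)
    (hgd : ∀ w ∈ U, HasDerivAt g' (g'' w) w)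
    (hx11 : ∀ w ∈ U, HasDerivAt x11 (x11' w) w)
    (hode : ∀ w ∈ U, g'' w - (g' w) ^ 2 + x11' w + (x11 w) ^ 2 + x12 w = 0)
    (hb : ∀ w, b w = Complex.exp (-(g w)) * (x11 w + g' w))
    (hX : ∀ w, X w = Complex.exp (g w) • E2 0 0 + Complex.exp (-(g w)) • E2 1 1 + b w • E2 0 1)
    (hDX : ∀ w ∈ U, ∀ i j, HasDerivAt (fun t => X t i j) (DX w i j) w)
    (hzc : ∀ w ∈ U, HasDerivAt zc (Complex.exp (2 * g w)) w) (hzc0 : zc 0 = 0) :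
    ∀ w ∈ U,
      (X w)⁻¹ * (x11 w • (E2 0 0 - E2 1 1) + E2 1 0 + x12 w • E2 0 1) * X w
          + (X w)⁻¹ * DX w
        = Complex.exp (2 * g w) • E2 1 0 :=
  stmt6_general U g g' g'' x11 x11' x12 b X DX hg hgd hx11 hode hb hX hDX
end
end

section
/- The isotropic W-curve with parameter q = m/n: for positive coprime integers m ≠ n, with ε = (m+n) mod 2, define v_q(z) = (m-n)e₁ - (m+n)z^{(1+ε)m}e₃ - 2i√(mn)·z^{(m+n)(1+ε)/2}e₄ and w_q(z) = (m-n)e₂ - 2i√(mn)·z^{(m+n)(1+ε)/2}e₃ + (m+n)z^{n(1+ε)}e₄. Then for all z ∈ ℂ: (i) ω(v_q(z), w_q(z)) = 0 (Lagrangian condition), and (ii) ω(v_q, v_q')·ω(w_q, w_q') - ω(v_q, w_q')² = 0 (isotropy), where ω is the symplectic form ω(x,y) = x₁y₃ - x₃y₁ + x₂y₄ - x₄y₂ and ' denotes d/dz. -/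
/-!
Write `v(z) = c e₁ - p z^k e₃ + s z^a e₄` and `w(z) = c e₂ + s z^a e₃ + p z^l e₄`.
The Lagrangian condition holds for any constants, since the two `c s z^a` terms cancel.
Only `c` survives in the three pairings with derivatives, so the isotropy expression is
`-c² z^(2a-2) (p² k l + s² a²)` as soon as `k + l = 2a`. For the W-curve one takes
`c = m - n`, `p = m + n`, `s = -2i√(mn)`, `k = (1+ε)m`, `l = (1+ε)n`, and the bracket vanishes
because `(m+n)²(1+ε)² mn = 4 a² mn`; the parity correction `ε` is exactly what makes `a` integral.
-/

noncomputable section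

def omegaC (x y : Fin 4 → ℂ) : ℂ := x 0 * y 2 - x 2 * y 0 + x 1 * y 3 - x 3 * y 1

theorem two_dvd_mul_one_add_mod_two (N : ℕ) : 2 ∣ N * (1 + N % 2) := by
  rcases Nat.mod_two_eq_zero_or_one N with h | h
  · exact Dvd.dvd.mul_right (Nat.dvd_of_mod_eq_zero h) _
  · rw [h]
    exact Dvd.intro_left N rfl

theorem natCast_mul_pow_pred_mul_natCast_mul_pow_pred {R : Type*} [CommSemiring R] (z : R)
    (k l : ℕ) : (k * z ^ (k - 1)) * (l * z ^ (l - 1)) = (k * l : R) * z ^ (k + l - 2) := by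
  rcases k with _ | k
  · simp
  rcases l with _ | l
  · simp
  rw [show k + 1 + (l + 1) - 2 = k + l by omega, pow_add]
  simp only [Nat.add_sub_cancel]
  ring

namespace IsotropicCurve

variable (c p s : ℂ) (k l a : ℕ)

def curveV (z : ℂ) : Fin 4 → ℂ := ![c, 0, -p * z ^ k, s * z ^ a]

def curveW (z : ℂ) : Fin 4 → ℂ := ![0, c, s * z ^ a, p * z ^ l]

theorem omegaC_curveV_curveW (z : ℂ) : omegaC (curveV c p s k a z) (curveW c p s l a z) = 0 := by
  simp only [omegaC, curveV, curveW, Matrix.cons_val_zero, Matrix.cons_val_one,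
    Matrix.cons_val_two, Matrix.cons_val_three, Matrix.head_cons, Matrix.tail_cons]
  ring

theorem deriv_curveV (z : ℂ) :
    (fun i => deriv (fun t => curveV c p s k a t i) z) =
      ![0, 0, -p * (k * z ^ (k - 1)), s * (a * z ^ (a - 1))] := by
  funext i
  fin_cases i <;> simp [curveV]

theorem deriv_curveW (z : ℂ) :
    (fun i => deriv (fun t => curveW c p s l a t i) z) =
      ![0, 0, s * (a * z ^ (a - 1)), p * (l * z ^ (l - 1))] := by
  funext i
  fin_cases i <;> simp [curveW]

variable {c p s k l a}

theorem isotropy_curveV_curveW (hsum : k + l = 2 * a) (hrel : p ^ 2 * (k * l) + s ^ 2 * a ^ 2 = 0)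
    (z : ℂ) :
    let v := curveV c p s k a z
    let w := curveW c p s l a z
    let v' := fun i => deriv (fun t => curveV c p s k a t i) z
    let w' := fun i => deriv (fun t => curveW c p s l a t i) z
    omegaC v v' * omegaC w w' - omegaC v w' ^ 2 = 0 := by
  intro v w v' w'
  have hpow : (a * z ^ (a - 1)) * (a * z ^ (a - 1)) = (a * a : ℂ) * z ^ (k + l - 2) := by
    rw [natCast_mul_pow_pred_mul_natCast_mul_pow_pred, hsum, two_mul]
  simp only [v, w, v', w', deriv_curveV, deriv_curveW, omegaC, curveV, curveW,
    Matrix.cons_val_zero, Matrix.cons_val_one, Matrix.cons_val_two, Matrix.cons_val_three,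
    Matrix.head_cons, Matrix.tail_cons]
  linear_combination
    (-c ^ 2 * p ^ 2) * natCast_mul_pow_pred_mul_natCast_mul_pow_pred z k l
      - c ^ 2 * s ^ 2 * hpow - c ^ 2 * z ^ (k + l - 2) * hrel

end IsotropicCurve

open IsotropicCurve in
theorem stmt12_general (m n : ℕ) (sq : ℂ) (hsq : sq ^ 2 = (m : ℂ) * n) :
    let ε : ℕ := (m + n) % 2
    let v : ℂ → Fin 4 → ℂ := fun z =>
      ![(m : ℂ) - n, 0, -((m : ℂ) + n) * z ^ ((1 + ε) * m),
        -2 * Complex.I * sq * z ^ ((m + n) * (1 + ε) / 2)]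
    let w : ℂ → Fin 4 → ℂ := fun z =>
      ![0, (m : ℂ) - n, -2 * Complex.I * sq * z ^ ((m + n) * (1 + ε) / 2),
        ((m : ℂ) + n) * z ^ ((1 + ε) * n)]
    let v' : ℂ → Fin 4 → ℂ := fun z i => deriv (fun t => v t i) z
    let w' : ℂ → Fin 4 → ℂ := fun z i => deriv (fun t => w t i) z
    ∀ z : ℂ,
      omegaC (v z) (w z) = 0 ∧
      omegaC (v z) (v' z) * omegaC (w z) (w' z) - (omegaC (v z) (w' z)) ^ 2 = 0 := by
  intro ε v w v' w' z
  set a := (m + n) * (1 + ε) / 2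
  have h2a : 2 * a = (m + n) * (1 + ε) := Nat.mul_div_cancel' (two_dvd_mul_one_add_mod_two _)
  have h2aC : 2 * (a : ℂ) = (m + n) * (1 + ε) := by exact_mod_cast h2a
  have hsum : (1 + ε) * m + (1 + ε) * n = 2 * a := by rw [h2a]; ring
  have hrel : ((m : ℂ) + n) ^ 2 * (((1 + ε) * m : ℕ) * ((1 + ε) * n : ℕ))
      + (-2 * Complex.I * sq) ^ 2 * a ^ 2 = 0 := by
    push_cast
    linear_combination (-(m * n : ℂ) * (2 * a + (m + n) * (1 + ε))) * h2aC
      + 4 * (a : ℂ) ^ 2 * Complex.I ^ 2 * hsq + 4 * (a : ℂ) ^ 2 * (m * n) * Complex.I_sq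
  exact ⟨omegaC_curveV_curveW _ _ _ _ _ _ z, isotropy_curveV_curveW hsum hrel z⟩

theorem stmt12 (m n : ℕ) (hm : 0 < m) (hn : 0 < n) (hmn : m ≠ n) (hcop : Nat.Coprime m n)
    (sq : ℂ) (hsq : sq ^ 2 = (m : ℂ) * n) :
    let ε : ℕ := (m + n) % 2
    let v : ℂ → Fin 4 → ℂ := fun z =>
      ![(m : ℂ) - n, 0, -((m : ℂ) + n) * z ^ ((1 + ε) * m),
        -2 * Complex.I * sq * z ^ ((m + n) * (1 + ε) / 2)]
    let w : ℂ → Fin 4 → ℂ := fun z =>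
      ![0, (m : ℂ) - n, -2 * Complex.I * sq * z ^ ((m + n) * (1 + ε) / 2),
        ((m : ℂ) + n) * z ^ ((1 + ε) * n)]
    let v' : ℂ → Fin 4 → ℂ := fun z i => deriv (fun t => v t i) z
    let w' : ℂ → Fin 4 → ℂ := fun z i => deriv (fun t => w t i) z
    ∀ z : ℂ,
      omegaC (v z) (w z) = 0 ∧
      omegaC (v z) (v' z) * omegaC (w z) (w' z) - (omegaC (v z) (w' z)) ^ 2 = 0 :=
  stmt12_general m n sq hsq
end
end
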